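/- arXiv:1803.06216 — 2 statements merged into one kernel-verified Lean document; each statement's English description precedes it below -/
import Mathlib

section
/- Let (F v), v ∈ V, be a finite family in which each F v is either an above-anchored L-frame A(t v, h v, w v) or a below-anchored L-frame B(t v, h v, w v), let G be its intersection graph, and let X ⊆ V be the set of indices carrying above-anchored frames. Then for every dominating set D of G there exists a set D' ⊆ X with |D'| ≤ |D| such that every u ∈ X lies in D' or is adjacent in G to a member of D'. (Hence the optimum for dominating the above-anchored frames using only above-anchored frames is at most the optimum for the whole instance.) -/
/-!
Above-anchored frames lie in the half-plane `x + y ≥ 0` and below-anchored ones in `x + y ≤ 0`,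
each touching the diagonal only at its corner. So an above- and a below-anchored frame meet only
if their corners coincide, and then any above-anchored frame with that corner dominates everything
the below-anchored one dominated among the above-anchored frames. Replacing every member of `D` in
this way (and discarding the below-anchored ones without such a substitute) gives `D'`.
-/

/-- The above-anchored L-frame `A(t,h,w) = ({t} × [-t, -t+h]) ∪ ([t, t+w] × {-t})`. -/
def Aframe (t h w : ℝ) : Set (ℝ × ℝ) :=
  ({t} : Set ℝ) ×ˢ Set.Icc (-t) (-t + h) ∪ Set.Icc t (t + w) ×ˢ ({-t} : Set ℝ)

/-- The below-anchored L-frame `B(t,h,w) = ({t} × [-t-h, -t]) ∪ ([t-w, t] × {-t})`. -/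
def Bframe (t h w : ℝ) : Set (ℝ × ℝ) :=
  ({t} : Set ℝ) ×ˢ Set.Icc (-t - h) (-t) ∪ Set.Icc (t - w) t ×ˢ ({-t} : Set ℝ)

/-- The intersection graph of a family of subsets of the plane. -/
def interGraph {V : Type*} (F : V → Set (ℝ × ℝ)) : SimpleGraph V where
  Adj u v := u ≠ v ∧ (F u ∩ F v).Nonempty
  symm := by
    constructor
    intro u v h
    exact ⟨h.1.symm, by rw [Set.inter_comm]; exact h.2⟩
  loopless := by
    constructor
    intro u h
    exact h.1 rfl

/-- A set of vertices is a dominating set: every vertex is in it or adjacent to a member. -/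
def IsDomSet {V : Type*} (G : SimpleGraph V) (D : Set V) : Prop :=
  ∀ v, v ∈ D ∨ ∃ u ∈ D, G.Adj u v

open Finset

theorem SimpleGraph.exists_dominating_subset_of_replace {V : Type*} {G : SimpleGraph V}
    {X : Set V} {D : Finset V} (hD : ∀ u ∈ X, u ∈ D ∨ ∃ d ∈ D, G.Adj d u)
    (hrep : ∀ d, ∃ d', ∀ u ∈ X, (u = d ∨ G.Adj d u) → d' ∈ X ∧ (u = d' ∨ G.Adj d' u)) :
    ∃ D' : Finset V, ↑D' ⊆ X ∧ D'.card ≤ D.card ∧ ∀ u ∈ X, u ∈ D' ∨ ∃ d ∈ D', G.Adj d u := by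
  classical
  choose f hf using hrep
  refine ⟨(D.image f).filter (· ∈ X), fun v hv => (mem_filter.1 hv).2,
    (card_filter_le _ _).trans card_image_le, fun u hu => ?_⟩
  obtain ⟨d, hd, hdu⟩ : ∃ d ∈ D, u = d ∨ G.Adj d u := by
    rcases hD u hu with huD | ⟨d, hd, hadj⟩
    exacts [⟨u, huD, Or.inl rfl⟩, ⟨d, hd, Or.inr hadj⟩]
  obtain ⟨hfX, hfu⟩ := hf d u hu hdu
  have hmem : f d ∈ (D.image f).filter (· ∈ X) := mem_filter.2 ⟨mem_image_of_mem f hd, hfX⟩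
  rcases hfu with rfl | hadj
  exacts [Or.inl hmem, Or.inr ⟨f d, hmem, hadj⟩]

theorem corner_mem_Aframe {t h : ℝ} (w : ℝ) (hh : 0 ≤ h) : (t, -t) ∈ Aframe t h w :=
  Or.inl ⟨rfl, le_rfl, le_add_of_nonneg_right hh⟩

theorem eq_of_mem_Aframe_of_mem_Bframe {t h w t' h' w' : ℝ} {p : ℝ × ℝ}
    (hA : p ∈ Aframe t h w) (hB : p ∈ Bframe t' h' w') : t = t' := by
  rcases hA with ⟨h1, h2, h3⟩ | ⟨⟨h1, h2⟩, h3⟩ <;>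
    rcases hB with ⟨h4, h5, h6⟩ | ⟨⟨h4, h5⟩, h6⟩ <;>
    simp only [Set.mem_singleton_iff] at * <;> linarith

theorem interGraph_adj_of_mem {V : Type*} {F : V → Set (ℝ × ℝ)} {u v : V} {p : ℝ × ℝ}
    (hne : u ≠ v) (hu : p ∈ F u) (hv : p ∈ F v) : (interGraph F).Adj u v :=
  ⟨hne, p, hu, hv⟩

section LFrames

variable {V : Type*} {s : V → Bool} {t h w : V → ℝ} {F : V → Set (ℝ × ℝ)}

theorem corner_eq_of_adj_below_above
    (hF : ∀ v, F v = if s v then Aframe (t v) (h v) (w v) else Bframe (t v) (h v) (w v))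
    {d u : V} (hd : s d = false) (hu : s u = true) (hadj : (interGraph F).Adj d u) :
    t u = t d := by
  obtain ⟨-, p, hpd, hpu⟩ := hadj
  rw [hF, hd] at hpd
  rw [hF, hu] at hpu
  exact eq_of_mem_Aframe_of_mem_Bframe hpu hpd

theorem eq_or_adj_of_above_of_corner_eq
    (hF : ∀ v, F v = if s v then Aframe (t v) (h v) (w v) else Bframe (t v) (h v) (w v))
    (hh : ∀ v, 0 ≤ h v) {a u : V} (ha : s a = true) (hu : s u = true) (ht : t a = t u) :
    u = a ∨ (interGraph F).Adj a u := by
  refine (eq_or_ne u a).imp id fun hne => interGraph_adj_of_mem (p := (t u, -t u)) hne.symm ?_ ?_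
  · rw [hF, ha, if_pos rfl, ← ht]
    exact corner_mem_Aframe _ (hh a)
  · rw [hF, hu, if_pos rfl]
    exact corner_mem_Aframe _ (hh u)

end LFrames

theorem above_anchored_dominated_from_above_general {V : Type*}
    (s : V → Bool) (t h w : V → ℝ)
    (hh : ∀ v, 0 ≤ h v)
    (F : V → Set (ℝ × ℝ))
    (hF : ∀ v, F v = if s v then Aframe (t v) (h v) (w v) else Bframe (t v) (h v) (w v))
    (G : SimpleGraph V) (hG : G = interGraph F)
    (X : Set V) (hX : X = {v | s v = true})
    (D : Finset V) (hD : IsDomSet G ↑D) :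
    ∃ D' : Finset V, ↑D' ⊆ X ∧ D'.card ≤ D.card ∧
      ∀ u ∈ X, u ∈ D' ∨ ∃ d ∈ D', G.Adj d u := by
  subst hG hX
  refine SimpleGraph.exists_dominating_subset_of_replace (fun u _ => hD u) fun d => ?_
  cases hsd : s d
  · have hcorner : ∀ u, s u = true → (u = d ∨ (interGraph F).Adj d u) → t u = t d := by
      rintro u hsu (rfl | hadj)
      exacts [absurd hsu (by simp [hsd]), corner_eq_of_adj_below_above hF hsd hsu hadj]
    by_cases hex : ∃ a, s a = true ∧ t a = t d
    · obtain ⟨a, hsa, hta⟩ := hex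
      exact ⟨a, fun u hsu hdu => ⟨hsa, eq_or_adj_of_above_of_corner_eq hF hh hsa hsu
        (hta.trans (hcorner u hsu hdu).symm)⟩⟩
    · exact ⟨d, fun u hsu hdu => absurd ⟨u, hsu, hcorner u hsu hdu⟩ hex⟩
  · exact ⟨d, fun _ _ hdu => ⟨hsd, hdu⟩⟩

/-- For a family of diagonal-anchored L-frames (each anchored above or below the diagonal),
with `X` the indices of the above-anchored frames: for every dominating set `D` of the
intersection graph there is a set `D' ⊆ X` with `|D'| ≤ |D|` such that every `u ∈ X` lies in
`D'` or is adjacent to a member of `D'`. -/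
theorem above_anchored_dominated_from_above {V : Type*} [Fintype V]
    (s : V → Bool) (t h w : V → ℝ)
    (hh : ∀ v, 0 ≤ h v) (hw : ∀ v, 0 ≤ w v)
    (F : V → Set (ℝ × ℝ))
    (hF : ∀ v, F v = if s v then Aframe (t v) (h v) (w v) else Bframe (t v) (h v) (w v))
    (G : SimpleGraph V) (hG : G = interGraph F)
    (X : Set V) (hX : X = {v | s v = true})
    (D : Finset V) (hD : IsDomSet G ↑D) :
    ∃ D' : Finset V, ↑D' ⊆ X ∧ D'.card ≤ D.card ∧
      ∀ u ∈ X, u ∈ D' ∨ ∃ d ∈ D', G.Adj d u :=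
  above_anchored_dominated_from_above_general s t h w hh F hF G hG X hX D hD
end

section
/- Under the setup, no two down arcs cross: there do not exist pairs (b₁,r₁) ∈ E' and (b₂,r₂) ∈ E', each admitting a down witness, such that, writing α = min(t b₁, t r₁), β = max(t b₁, t r₁), γ = min(t b₂, t r₂), δ = max(t b₂, t r₂), the intervals (α,β) and (γ,δ) interleave. -/
/-- Euclidean distance between the corners `(t b, -(t b))` and `(t r, -(t r))` of the
L-frames indexed by `b` and `r`. -/
noncomputable def cornerDist {V : Type*} (t : V → ℝ) (b r : V) : ℝ :=
  Real.sqrt ((t b - t r) ^ 2 + ((-(t b)) - (-(t r))) ^ 2)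

/-- `(b,r) ∈ S(u)`: `b ∈ B`, `r ∈ R`, and both frames `F b` and `F r` intersect `F u`. -/
def InS {V : Type*} (F : V → Set (ℝ × ℝ)) (B R : Set V) (u b r : V) : Prop :=
  b ∈ B ∧ r ∈ R ∧ (F b ∩ F u).Nonempty ∧ (F r ∩ F u).Nonempty

/-- `u` is a witness of `(b,r)`: `(b,r) ∈ S(u)` and the distance between the corners of
`F b` and `F r` is minimum among all pairs in `S(u)`. -/
def IsWitness {V : Type*} (F : V → Set (ℝ × ℝ)) (t : V → ℝ) (B R : Set V)
    (u b r : V) : Prop :=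
  InS F B R u b r ∧ ∀ b' r', InS F B R u b' r' → cornerDist t b r ≤ cornerDist t b' r'

/-- `(b,r) ∈ E'`: the pair admits a witness. -/
def InE' {V : Type*} (F : V → Set (ℝ × ℝ)) (t : V → ℝ) (B R : Set V) (b r : V) : Prop :=
  ∃ u, IsWitness F t B R u b r

/-- `u` is a top witness of `(b,r)`. -/
def TopWitness {V : Type*} (F : V → Set (ℝ × ℝ)) (t : V → ℝ) (B R : Set V)
    (u b r : V) : Prop :=
  IsWitness F t B R u b r ∧ t b ≤ t u ∧ t r ≤ t u

/-- `u` is a down witness of `(b,r)`. -/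
def DownWitness {V : Type*} (F : V → Set (ℝ × ℝ)) (t : V → ℝ) (B R : Set V)
    (u b r : V) : Prop :=
  IsWitness F t B R u b r ∧ t u ≤ t b ∧ t u ≤ t r

/-- `u` is a mixed witness of `(b,r)`. -/
def MixedWitness {V : Type*} (F : V → Set (ℝ × ℝ)) (t : V → ℝ) (B R : Set V)
    (u b r : V) : Prop :=
  IsWitness F t B R u b r ∧ min (t b) (t r) < t u ∧ t u < max (t b) (t r)

/-- Open intervals `(p,q)` and `(r,s)` interleave. -/
def Interleave (p q r s : ℝ) : Prop :=
  (p < r ∧ r < q ∧ q < s) ∨ (r < p ∧ p < s ∧ s < q)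

/-!
A down witness `u` of `(b,r)` has `t u ≤ t b, t r`, so meeting `F b` and `F r` forces the
horizontal arm of `F u` to reach past both corners. Of two crossing down arcs, take the one whose
witness `u` has the larger `t`. The other arc has an endpoint `v ∈ B ∪ R` strictly inside the span
of the first, and the vertical arm of `F v`, which reaches the height of the other witness, also
reaches the horizontal arm of `F u`. Then `v` replaces `b` or `r` in a pair of `S(u)` with strictly
closer corners, contradicting the minimality of `(b,r)`.
-/

open Set

lemma Aframe_inter_nonempty_iff {tu hu wu tx hx wx : ℝ} (hwu : 0 ≤ wu) (hhx : 0 ≤ hx)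
    (htu : tu ≤ tx) :
    (Aframe tx hx wx ∩ Aframe tu hu wu).Nonempty ↔ tx - tu ≤ wu ∧ tx - tu ≤ hx := by
  simp only [Set.Nonempty, Aframe, mem_inter_iff, mem_union, mem_prod, mem_singleton_iff,
    mem_Icc, Prod.exists]
  constructor
  · rintro ⟨x, y, ⟨hx₁, hy₁, hy₂⟩ | ⟨hx₁, hy₁⟩, ⟨hx₂, hy₃, hy₄⟩ | ⟨hx₂, hy₂⟩⟩ <;>
      constructor <;> linarith
  · rintro ⟨hw, hh⟩
    exact ⟨tx, -tu, .inl ⟨rfl, by linarith, by linarith⟩, .inr ⟨⟨htu, by linarith⟩, rfl⟩⟩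

lemma cornerDist_eq {V : Type*} (t : V → ℝ) (a b : V) :
    cornerDist t a b = √2 * |t a - t b| := by
  rw [cornerDist, show (t a - t b) ^ 2 + (-t a - -t b) ^ 2 = 2 * (t a - t b) ^ 2 by ring,
    Real.sqrt_mul zero_le_two, Real.sqrt_sq_eq_abs]

lemma cornerDist_lt_cornerDist_iff {V : Type*} (t : V → ℝ) {a b c d : V} :
    cornerDist t a b < cornerDist t c d ↔ |t a - t b| < |t c - t d| := by
  simp only [cornerDist_eq, mul_lt_mul_iff_right₀ (by positivity : (0 : ℝ) < √2)]

lemma Interleave.symm {p q r s : ℝ} (h : Interleave p q r s) : Interleave r s p q :=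
  Or.symm h

lemma Interleave.mem_Ioo_or_mem_Ioo {a b c d : ℝ}
    (h : Interleave (min a b) (max a b) (min c d) (max c d)) :
    c ∈ Ioo (min a b) (max a b) ∨ d ∈ Ioo (min a b) (max a b) := by
  rcases le_total c d with hcd | hcd
  · rw [min_eq_left hcd, max_eq_right hcd] at h
    rcases h with ⟨h₁, h₂, -⟩ | ⟨-, h₁, h₂⟩
    exacts [.inl ⟨h₁, h₂⟩, .inr ⟨h₁, h₂⟩]
  · rw [min_eq_right hcd, max_eq_left hcd] at h
    rcases h with ⟨h₁, h₂, -⟩ | ⟨-, h₁, h₂⟩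
    exacts [.inr ⟨h₁, h₂⟩, .inl ⟨h₁, h₂⟩]

section Witness

variable {V : Type*} {F : V → Set (ℝ × ℝ)} {t : V → ℝ} {B R : Set V} {u b r v : V}

lemma IsWitness.not_inter_of_mem_Ioo (hu : IsWitness F t B R u b r) (hv : v ∈ B ∪ R)
    (hvt : t v ∈ Ioo (min (t b) (t r)) (max (t b) (t r))) : ¬ (F v ∩ F u).Nonempty := by
  intro hvu
  obtain ⟨⟨hb, hr, hbu, hru⟩, hmin⟩ := hu
  have hspan : |t b - t r| = max (t b) (t r) - min (t b) (t r) := by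
    rw [abs_sub_comm, max_sub_min_eq_abs]
  have := min_le_left (t b) (t r)
  have := min_le_right (t b) (t r)
  have := le_max_left (t b) (t r)
  have := le_max_right (t b) (t r)
  obtain ⟨hlo, hhi⟩ := hvt
  rcases hv with hvB | hvR
  · have hcloser : cornerDist t v r < cornerDist t b r := by
      rw [cornerDist_lt_cornerDist_iff, hspan, abs_lt]
      constructor <;> linarith
    exact (hmin v r ⟨hvB, hr, hvu, hru⟩).not_gt hcloser
  · have hcloser : cornerDist t b v < cornerDist t b r := by
      rw [cornerDist_lt_cornerDist_iff, hspan, abs_lt]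
      constructor <;> linarith
    exact (hmin b v ⟨hb, hvR, hbu, hvu⟩).not_gt hcloser

variable {h w : V → ℝ} (hh : ∀ v, 0 ≤ h v) (hw : ∀ v, 0 ≤ w v)
  (hF : ∀ v, F v = Aframe (t v) (h v) (w v))
include hh hw hF

lemma frames_inter_nonempty_iff (huv : t u ≤ t v) :
    (F v ∩ F u).Nonempty ↔ t v - t u ≤ w u ∧ t v - t u ≤ h v := by
  rw [hF, hF]
  exact Aframe_inter_nonempty_iff (hw u) (hh v) huv

lemma DownWitness.notMem_Ioo {u' : V} (hd : DownWitness F t B R u b r) (hv : v ∈ B ∪ R)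
    (hu' : t u' ≤ t u) (hvu' : (F v ∩ F u').Nonempty) :
    t v ∉ Ioo (min (t b) (t r)) (max (t b) (t r)) := by
  intro hvt
  obtain ⟨hwit, hub, hur⟩ := hd
  have huv : t u ≤ t v := (le_min hub hur).trans hvt.1.le
  have hv_reach := ((frames_inter_nonempty_iff hh hw hF (hu'.trans huv)).1 hvu').2
  have hb_reach := ((frames_inter_nonempty_iff hh hw hF hub).1 hwit.1.2.2.1).1
  have hr_reach := ((frames_inter_nonempty_iff hh hw hF hur).1 hwit.1.2.2.2).1
  refine hwit.not_inter_of_mem_Ioo hv hvt ((frames_inter_nonempty_iff hh hw hF huv).2 ⟨?_, ?_⟩)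
  · rcases lt_max_iff.1 hvt.2 with hvb | hvr <;> linarith
  · linarith

end Witness

theorem no_two_down_arcs_cross_general {V : Type*}
    (t h w : V → ℝ) (hh : ∀ v, 0 ≤ h v) (hw : ∀ v, 0 ≤ w v)
    (F : V → Set (ℝ × ℝ)) (hF : ∀ v, F v = Aframe (t v) (h v) (w v))
    (B R : Set V) :
    ¬ ∃ (b₁ r₁ b₂ r₂ u₁ u₂ : V),
        DownWitness F t B R u₁ b₁ r₁ ∧ DownWitness F t B R u₂ b₂ r₂ ∧
        Interleave (min (t b₁) (t r₁)) (max (t b₁) (t r₁))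
          (min (t b₂) (t r₂)) (max (t b₂) (t r₂)) := by
  rintro ⟨b₁, r₁, b₂, r₂, u₁, u₂, hd₁, hd₂, hI⟩
  have no_cross_of_le : ∀ {b r u b' r' u' : V}, DownWitness F t B R u b r →
      DownWitness F t B R u' b' r' → t u' ≤ t u →
      Interleave (min (t b) (t r)) (max (t b) (t r)) (min (t b') (t r')) (max (t b') (t r')) →
      False := by
    intro b r u b' r' u' hd ⟨⟨⟨hb', hr', hb'u', hr'u'⟩, _⟩, _⟩ hu hI
    rcases hI.mem_Ioo_or_mem_Ioo with hin | hin
    exacts [hd.notMem_Ioo hh hw hF (.inl hb') hu hb'u' hin,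
      hd.notMem_Ioo hh hw hF (.inr hr') hu hr'u' hin]
  rcases le_total (t u₂) (t u₁) with hu | hu
  exacts [no_cross_of_le hd₁ hd₂ hu hI, no_cross_of_le hd₂ hd₁ hu hI.symm]

/-- No two down arcs cross. -/
theorem no_two_down_arcs_cross {V : Type*} [Fintype V]
    (t h w : V → ℝ) (hh : ∀ v, 0 ≤ h v) (hw : ∀ v, 0 ≤ w v)
    (F : V → Set (ℝ × ℝ)) (hF : ∀ v, F v = Aframe (t v) (h v) (w v))
    (B R : Set V) (hBR : Disjoint B R)
    (hB : IsDomSet (interGraph F) B) (hR : IsDomSet (interGraph F) R) :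
    ¬ ∃ (b₁ r₁ b₂ r₂ u₁ u₂ : V),
        DownWitness F t B R u₁ b₁ r₁ ∧ DownWitness F t B R u₂ b₂ r₂ ∧
        Interleave (min (t b₁) (t r₁)) (max (t b₁) (t r₁))
          (min (t b₂) (t r₂)) (max (t b₂) (t r₂)) :=
  no_two_down_arcs_cross_general t h w hh hw F hF B R
end
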